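/- arXiv:2409.06006 — 5 statements merged into one kernel-verified Lean document; each statement's English description precedes it below -/
import Mathlib

section
/- Let N_0, ..., N_m be positive integers with m ≥ 1. Suppose that for every choice of integers a_0, ..., a_m with 0 ≤ a_j ≤ N_j and not all a_j equal to 0 and not all a_j equal to N_j, the quantity ζ(a) := Σ_{j=1}^m (a_{j-1}(N_j - a_j) + a_j(N_{j-1} - a_{j-1})) - 2·Σ_{j=0}^m a_j(N_j - a_j) is strictly positive. Then N_j = 1 for all j. -/
/-!
The constant splitting `a ≡ 1` is admissible because every `N_j ≥ 1`, and its `ζ` telescopes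
to `2 - N_0 - N_m ≤ 0`. So it must be one of the two excluded splittings, which forces `N ≡ 1`.
-/

/-- The quantity `ζ(a) = Σ_{j=1}^m (a_{j-1}(N_j - a_j) + a_j(N_{j-1} - a_{j-1}))
- 2·Σ_{j=0}^m a_j(N_j - a_j)` from the A-type analysis. -/
def zetaA (m : ℕ) (a N : ℕ → ℤ) : ℤ :=
  (∑ j ∈ Finset.Icc 1 m, (a (j - 1) * (N j - a j) + a j * (N (j - 1) - a (j - 1))))
    - 2 * ∑ j ∈ Finset.range (m + 1), a j * (N j - a j)

open Finset

theorem sum_Icc_add_pred_sub_two_mul_sum_range {R : Type*} [CommRing R] (f : ℕ → R) (m : ℕ) :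
    ∑ j ∈ Icc 1 m, (f j + f (j - 1)) - 2 * ∑ j ∈ range (m + 1), f j = -(f 0 + f m) := by
  have hshift : ∑ j ∈ Icc 1 m, (f j + f (j - 1)) = ∑ k ∈ range m, (f (k + 1) + f k) := by
    rw [← Ico_add_one_right_eq_Icc, sum_Ico_eq_sum_range]
    simp [add_comm 1]
  rw [hshift, sum_add_distrib]
  linear_combination -sum_range_succ' f m - sum_range_succ f m

theorem zetaA_const_one (m : ℕ) (N : ℕ → ℤ) : zetaA m (fun _ => 1) N = 2 - N 0 - N m := by
  have := sum_Icc_add_pred_sub_two_mul_sum_range (fun j => N j - 1) m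
  simp only [zetaA, one_mul]
  linarith

theorem stmt_2_general (m : ℕ) (N : ℕ → ℤ) (hN : ∀ j ≤ m, 0 < N j)
    (h : ∀ a : ℕ → ℤ, (∀ j ≤ m, 0 ≤ a j ∧ a j ≤ N j) →
      (¬ ∀ j ≤ m, a j = 0) → (¬ ∀ j ≤ m, a j = N j) → 0 < zetaA m a N) :
    ∀ j ≤ m, N j = 1 := by
  intro j hj
  by_contra hNj
  have hpos := h (fun _ => 1) (fun k hk => ⟨zero_le_one, hN k hk⟩)
    (fun hall => one_ne_zero (hall 0 (Nat.zero_le m)))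
    (fun hall => hNj (hall j hj).symm)
  rw [zetaA_const_one] at hpos
  linarith [hN 0 (Nat.zero_le m), hN m le_rfl]

/-- if `ζ(a) > 0` for every integer choice `0 ≤ a_j ≤ N_j` with the `a_j`
not all `0` and not all `N_j`, then all `N_j = 1`. -/
theorem stmt_2 (m : ℕ) (hm : 1 ≤ m) (N : ℕ → ℤ) (hN : ∀ j ≤ m, 0 < N j)
    (h : ∀ a : ℕ → ℤ, (∀ j ≤ m, 0 ≤ a j ∧ a j ≤ N j) →
      (¬ ∀ j ≤ m, a j = 0) → (¬ ∀ j ≤ m, a j = N j) → 0 < zetaA m a N) :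
    ∀ j ≤ m, N j = 1 :=
  stmt_2_general m N hN h
end

section
/- Let N^A_0, ..., N^A_{2m} be nonnegative integers satisfying N^A_j = N^A_{2m-j} for all j, with total sum 2n+1 and middle size N^A_m odd. Let a_0, ..., a_{2m} be integers with 0 ≤ a_j ≤ N^A_j. Then there exists a signed permutation π of {1,...,n,0,-n,...,-1} (fixing 0, with π(i)=j ⇒ π(-i)=-j) and an index 1 ≤ k ≤ n such that a_j counts the elements of the j-th consecutive block (of size N^A_j) of positions mapped by π into {1,...,k}, if and only if some a_j > 0 and a_j + a_{2m-j} ≤ N^A_j for all j. -/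
/-!
Encode the positions as `1, …, P` with `P = 2n + 1`; the sign change is the reflection
`t ↦ P + 1 - t`, which maps block `j` onto block `2m - j`.

If `π` is signed and `k ≤ n`, the reflection sends the positions of block `2m - j` that `π` maps
into `{1, …, k}` to positions of block `j` that `π` maps into `{P + 1 - k, …, P}`, which misses
`{1, …, k}`; hence `a_j + a_{2m-j} ≤ N_j`. The preimage of `1` makes some `a_j` positive.

Conversely, let `S` be the union of the first `a_j` positions of each block. The inequalities
`a_j + a_{2m-j} ≤ N_j` say exactly that `S` misses its reflection, so `2|S| ≤ P`, i.e. `|S| ≤ n`.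
Ranking the positions by a key that puts `S` first, its reflection last and the rest in between
gives a permutation that sends `S` onto `{1, …, |S|}`, and it is signed because the key is
antisymmetric under the reflection.
-/

/-- Prefix sums of the block sizes: `blockStart N j = N_0 + ⋯ + N_{j-1}`, so the
`j`-th consecutive block of positions is `{blockStart N j + 1, …, blockStart N j + N j}`. -/
def blockStart (N : ℕ → ℕ) (j : ℕ) : ℕ := ∑ i ∈ Finset.range j, N i

open Finset

section Rank

variable {α β : Type*} [LinearOrder β] (X : Finset α) (key : α → β)

def rankBy (t : α) : ℕ := #(X.filter fun s => key s ≤ key t)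

variable {X key}

theorem rankBy_lt_rankBy {s t : α} (ht : t ∈ X) (h : key s < key t) :
    rankBy X key s < rankBy X key t := by
  refine card_lt_card ((ssubset_iff_of_subset ?_).2 ⟨t, ?_, ?_⟩)
  · exact monotone_filter_right X fun u _ hu => hu.trans h.le
  · exact mem_filter.2 ⟨ht, le_rfl⟩
  · simpa using fun _ => h

theorem rankBy_injOn (hkey : Set.InjOn key X) : Set.InjOn (rankBy X key) X := by
  intro s hs t ht h
  by_contra hst
  rcases lt_or_gt_of_ne (hkey.ne hs ht hst) with hlt | hlt
  · exact (rankBy_lt_rankBy ht hlt).ne h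
  · exact (rankBy_lt_rankBy hs hlt).ne' h

theorem rankBy_mem_Icc {t : α} (ht : t ∈ X) : rankBy X key t ∈ Icc 1 #X :=
  mem_Icc.2 ⟨card_pos.2 ⟨t, mem_filter.2 ⟨ht, le_rfl⟩⟩, card_le_card (filter_subset _ _)⟩

theorem rankBy_le_card_iff {S : Finset α} (hS : S ⊆ X)
    (hlow : ∀ s ∈ S, ∀ t ∈ X, t ∉ S → key s < key t) {t : α} (ht : t ∈ X) :
    rankBy X key t ≤ #S ↔ t ∈ S := by
  classical
  constructor
  · intro h
    by_contra htS
    have hsub : insert t S ⊆ X.filter fun s => key s ≤ key t := by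
      intro u hu
      rcases mem_insert.1 hu with rfl | huS
      · exact mem_filter.2 ⟨ht, le_rfl⟩
      · exact mem_filter.2 ⟨hS huS, (hlow u huS t ht htS).le⟩
    have := card_le_card hsub
    rw [card_insert_of_notMem htS] at this
    exact absurd h (by unfold rankBy; omega)
  · intro htS
    refine card_le_card fun u hu => ?_
    obtain ⟨huX, hut⟩ := mem_filter.1 hu
    by_contra huS
    exact absurd hut (not_le.2 (hlow t htS u huX huS))

theorem rankBy_add_rankBy_of_antitone {σ : α → α} (hσX : Set.MapsTo σ X X)
    (hσσ : ∀ t ∈ X, σ (σ t) = t) (hkey : Set.InjOn key X)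
    (hσkey : ∀ s ∈ X, ∀ t ∈ X, key s ≤ key (σ t) ↔ key t ≤ key (σ s)) {t : α} (ht : t ∈ X) :
    rankBy X key (σ t) + rankBy X key t = #X + 1 := by
  classical
  have hreflect : rankBy X key (σ t) = #(X.filter fun u => key t ≤ key u) := by
    refine card_nbij' σ σ ?_ ?_ (fun s hs => hσσ s (mem_filter.1 hs).1)
      (fun u hu => hσσ u (mem_filter.1 hu).1)
    · intro s hs
      obtain ⟨hsX, hst⟩ := mem_filter.1 hs
      exact mem_filter.2 ⟨hσX hsX, (hσkey s hsX t ht).1 hst⟩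
    · intro u hu
      obtain ⟨huX, htu⟩ := mem_filter.1 hu
      refine mem_filter.2 ⟨hσX huX, (hσkey _ (hσX huX) t ht).2 ?_⟩
      rwa [hσσ u huX]
  have hunion : (X.filter fun u => key t ≤ key u) ∪ (X.filter fun s => key s ≤ key t) = X := by
    rw [← filter_or]; exact filter_true_of_mem fun u _ => le_total _ _
  have hinter : (X.filter fun u => key t ≤ key u) ∩ (X.filter fun s => key s ≤ key t) = {t} := by
    rw [← filter_and]
    ext u
    simp only [mem_filter, mem_singleton]
    constructor
    · rintro ⟨huX, h₁, h₂⟩; exact hkey huX ht (le_antisymm h₂ h₁)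
    · rintro rfl; exact ⟨ht, le_rfl, le_rfl⟩
  have := card_union_add_card_inter (X.filter fun u => key t ≤ key u)
    (X.filter fun s => key s ≤ key t)
  rw [hunion, hinter, card_singleton] at this
  rw [hreflect]; exact this.symm

end Rank

theorem Equiv.Perm.symm_apply_mem_of_eq_self_outside {α : Type*} {π : Equiv.Perm α} {X : Set α}
    (hπ : ∀ t ∉ X, π t = t) {x : α} (hx : x ∈ X) : π.symm x ∈ X := by
  by_contra h
  have := hπ _ h
  rw [Equiv.apply_symm_apply] at this
  exact h (this ▸ hx)

theorem Finset.exists_perm_eqOn_of_injOn {α : Type*} {X : Finset α} {f : α → α}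
    (hmaps : Set.MapsTo f X X) (hinj : Set.InjOn f X) :
    ∃ π : Equiv.Perm α, (∀ t ∈ X, π t = f t) ∧ ∀ t ∉ X, π t = t := by
  classical
  have hbij : Set.BijOn f X X := (X.finite_toSet.injOn_iff_bijOn_of_mapsTo hmaps).1 hinj
  refine ⟨Equiv.Perm.ofSubtype (p := (· ∈ X)) (hbij.equiv f), fun t ht => ?_,
    fun t ht => Equiv.Perm.ofSubtype_apply_of_not_mem _ ht⟩
  rw [Equiv.Perm.ofSubtype_apply_of_mem _ ht]; rfl

section Reflection

variable {P : ℕ}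

theorem reflect_mem_Icc {t : ℕ} (ht : t ∈ Icc 1 P) : P + 1 - t ∈ Icc 1 P := by
  simp only [mem_Icc] at ht ⊢; omega

theorem two_mul_card_le_of_disjoint_reflect {S : Finset ℕ} (hS : S ⊆ Icc 1 P)
    (hdisj : ∀ t ∈ S, P + 1 - t ∉ S) : 2 * #S ≤ P := by
  have hinj : Set.InjOn (P + 1 - ·) S := fun s hs t ht h => by
    have := hS hs; have := hS ht; simp only [mem_Icc] at *; omega
  calc 2 * #S = #S + #(S.image (P + 1 - ·)) := by rw [card_image_of_injOn hinj]; ring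
    _ = #(S ∪ S.image (P + 1 - ·)) := by
      refine (card_union_of_disjoint (disjoint_left.2 fun t htS ht => ?_)).symm
      obtain ⟨s, hs, rfl⟩ := mem_image.1 ht
      exact hdisj s hs htS
    _ ≤ #(Icc 1 P) := card_le_card (union_subset hS fun t ht => by
      obtain ⟨s, hs, rfl⟩ := mem_image.1 ht; exact reflect_mem_Icc (hS hs))
    _ = P := by simp

theorem exists_perm_reflect_le_card_iff {S : Finset ℕ} (hS : S ⊆ Icc 1 P)
    (hdisj : ∀ t ∈ S, P + 1 - t ∉ S) :
    ∃ π : Equiv.Perm ℕ, (∀ t ∉ Icc 1 P, π t = t) ∧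
      (∀ t ∈ Icc 1 P, π (P + 1 - t) = P + 1 - π t) ∧ ∀ t ∈ Icc 1 P, (π t ≤ #S ↔ t ∈ S) := by
  classical
  -- Sort `S` first, its reflection last and the rest in between, ties broken by position.
  -- Since `key (P + 1 - t) + key t` is constant, ranking by `key` commutes with the reflection.
  let key : ℕ → ℕ := fun t =>
    if t ∈ S then t else if P + 1 - t ∈ S then t + 2 * (P + 1) else t + (P + 1)
  have hkey_injOn : Set.InjOn key (Icc 1 P) := fun s hs t ht h => by
    simp only [coe_Icc, Set.mem_Icc, key] at hs ht h
    split_ifs at h <;> omega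
  have hkey_reflect : ∀ t ∈ Icc 1 P, key (P + 1 - t) + key t = 3 * (P + 1) := by
    intro t ht
    simp only [mem_Icc] at ht
    have hσσ : P + 1 - (P + 1 - t) = t := by omega
    have := hdisj t
    have := hdisj (P + 1 - t)
    simp only [key, hσσ]
    split_ifs <;> simp_all <;> omega
  have hlow : ∀ s ∈ S, ∀ t ∈ Icc 1 P, t ∉ S → key s < key t := by
    intro s hs t ht htS
    have := hS hs
    simp only [mem_Icc] at this ht
    simp only [key, hs, htS, if_true, if_false]
    split_ifs <;> omega
  obtain ⟨π, hπ, hπ_out⟩ := exists_perm_eqOn_of_injOn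
    (fun t ht => by simpa using rankBy_mem_Icc (key := key) ht) (rankBy_injOn hkey_injOn)
  refine ⟨π, hπ_out, fun t ht => ?_, fun t ht => ?_⟩
  · have := rankBy_add_rankBy_of_antitone (σ := (P + 1 - ·)) (fun s hs => reflect_mem_Icc hs)
      (fun s hs => by simp only [mem_Icc] at hs; omega) hkey_injOn
      (fun s hs u hu => by have := hkey_reflect s hs; have := hkey_reflect u hu; omega) ht
    rw [hπ _ (reflect_mem_Icc ht), hπ t ht]
    simp only [Nat.card_Icc, add_tsub_cancel_right] at this
    omega
  · rw [hπ t ht]; exact rankBy_le_card_iff hS hlow ht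

end Reflection

theorem card_filter_add_card_filter_reflect_le {P k : ℕ} (hk : 2 * k ≤ P) {π : ℕ → ℕ}
    {B : Finset ℕ} (hB : B ⊆ Icc 1 P) (hπ : ∀ t ∈ B, π (P + 1 - t) = P + 1 - π t) :
    #(B.filter (π · ≤ k)) + #((B.image (P + 1 - ·)).filter (π · ≤ k)) ≤ #B := by
  have hinj : Set.InjOn (P + 1 - ·) (B.filter fun t => π (P + 1 - t) ≤ k) := fun s hs t ht h => by
    have := hB (mem_filter.1 hs).1; have := hB (mem_filter.1 ht).1
    simp only [mem_Icc] at *; omega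
  rw [filter_image, card_image_of_injOn hinj,
    ← card_union_of_disjoint (disjoint_filter.2 fun t ht h₁ h₂ => by rw [hπ t ht] at h₂; omega)]
  exact card_le_card (union_subset (filter_subset _ _) (filter_subset _ _))

section Blocks

variable (N : ℕ → ℕ)

def block (j : ℕ) : Finset ℕ := Icc (blockStart N j + 1) (blockStart N j + N j)

def blockPrefix (b : ℕ → ℕ) (j : ℕ) : Finset ℕ := Icc (blockStart N j + 1) (blockStart N j + b j)

variable {N}

theorem card_block (j : ℕ) : #(block N j) = N j := by simp [block]

theorem blockStart_succ (j : ℕ) : blockStart N (j + 1) = blockStart N j + N j :=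
  sum_range_succ N j

theorem blockStart_mono : Monotone (blockStart N) := fun _ _ h =>
  sum_le_sum_of_subset (range_subset_range.2 h)

theorem block_subset_Icc {M j : ℕ} (hj : j ≤ M) : block N j ⊆ Icc 1 (blockStart N (M + 1)) := by
  have := blockStart_mono (N := N) (by omega : j + 1 ≤ M + 1)
  rw [blockStart_succ] at this
  intro t ht
  simp only [block, mem_Icc] at ht ⊢
  omega

theorem blockPrefix_subset_block {b : ℕ → ℕ} {j : ℕ} (hb : b j ≤ N j) :
    blockPrefix N b j ⊆ block N j :=
  Icc_subset_Icc le_rfl (by omega)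

theorem disjoint_block {i j : ℕ} (hij : i ≠ j) : Disjoint (block N i) (block N j) := by
  wlog hlt : i < j generalizing i j
  · exact (this hij.symm (by omega)).symm
  have := blockStart_mono (N := N) hlt
  rw [blockStart_succ] at this
  exact disjoint_left.2 fun t hi hj => by simp only [block, mem_Icc] at hi hj; omega

theorem exists_mem_block {M t : ℕ} (ht : t ∈ Icc 1 (blockStart N (M + 1))) :
    ∃ j ≤ M, t ∈ block N j := by
  induction M with
  | zero => exact ⟨0, le_rfl, by simpa [block, blockStart] using ht⟩
  | succ M ih =>
    by_cases hle : t ≤ blockStart N (M + 1)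
    · obtain ⟨j, hj, htj⟩ := ih (mem_Icc.2 ⟨(mem_Icc.1 ht).1, hle⟩)
      exact ⟨j, hj.trans M.le_succ, htj⟩
    · refine ⟨M + 1, le_rfl, ?_⟩
      rw [blockStart_succ] at ht
      simp only [block, mem_Icc] at ht ⊢
      omega

theorem exists_card_filter_block_pos {M k : ℕ} {π : Equiv.Perm ℕ} (hk : 1 ≤ k)
    (hM : 1 ≤ blockStart N (M + 1)) (hπ : ∀ t ∉ Icc 1 (blockStart N (M + 1)), π t = t) :
    ∃ j ≤ M, 0 < #((block N j).filter (π · ≤ k)) := by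
  have h1 : π.symm 1 ∈ (Icc 1 (blockStart N (M + 1)) : Set ℕ) :=
    π.symm_apply_mem_of_eq_self_outside hπ (by simpa using hM)
  obtain ⟨j, hj, hj1⟩ := exists_mem_block (mem_coe.1 h1)
  exact ⟨j, hj, card_pos.2 ⟨_, mem_filter.2 ⟨hj1, by simpa using hk⟩⟩⟩

theorem blockStart_add_blockStart_sub {M j : ℕ} (hsym : ∀ i ≤ M, N i = N (M - i)) (hj : j ≤ M) :
    blockStart N (j + 1) + blockStart N (M - j) = blockStart N (M + 1) := by
  have htail : blockStart N (M - j) = ∑ i ∈ Ico (j + 1) (M + 1), N i := by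
    rw [blockStart, range_eq_Ico,
      sum_congr rfl fun i hi => hsym i (by simp only [mem_Ico] at hi; omega),
      sum_Ico_reflect N 0 (by omega : M - j ≤ M + 1), show M + 1 - (M - j) = j + 1 by omega,
      Nat.sub_zero]
  rw [htail, blockStart, blockStart, range_eq_Ico, range_eq_Ico,
    sum_Ico_consecutive _ (Nat.zero_le _) (by omega)]

theorem image_reflect_block {M j : ℕ} (hsym : ∀ i ≤ M, N i = N (M - i)) (hj : j ≤ M) :
    (block N j).image (blockStart N (M + 1) + 1 - ·) = block N (M - j) := by
  have h := blockStart_add_blockStart_sub hsym hj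
  rw [blockStart_succ j] at h
  have := hsym j hj
  ext u
  simp only [block, mem_image, mem_Icc]
  constructor
  · rintro ⟨t, ht, rfl⟩; omega
  · intro hu; exact ⟨blockStart N (M + 1) + 1 - u, by omega, by omega⟩

end Blocks

section BlockPrefix

variable {N b : ℕ → ℕ} {M : ℕ}

theorem mem_biUnion_blockPrefix_iff (hb : ∀ i ≤ M, b i ≤ N i) {j t : ℕ} (hj : j ≤ M)
    (ht : t ∈ block N j) :
    t ∈ (range (M + 1)).biUnion (blockPrefix N b) ↔ t ∈ blockPrefix N b j := by
  refine ⟨fun h => ?_, fun h => mem_biUnion.2 ⟨j, mem_range.2 (by omega), h⟩⟩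
  obtain ⟨i, hi, hti⟩ := mem_biUnion.1 h
  have hi : i ≤ M := Nat.lt_succ_iff.1 (mem_range.1 hi)
  obtain rfl : i = j := by
    by_contra hij
    exact disjoint_left.1 (disjoint_block hij) (blockPrefix_subset_block (hb i hi) hti) ht
  exact hti

theorem reflect_notMem_biUnion_blockPrefix (hsym : ∀ i ≤ M, N i = N (M - i))
    (hb : ∀ i ≤ M, b i ≤ N i) (hb_add : ∀ i ≤ M, b i + b (M - i) ≤ N i) {t : ℕ}
    (ht : t ∈ (range (M + 1)).biUnion (blockPrefix N b)) :
    blockStart N (M + 1) + 1 - t ∉ (range (M + 1)).biUnion (blockPrefix N b) := by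
  obtain ⟨j, hj, htj⟩ := mem_biUnion.1 ht
  have hj : j ≤ M := Nat.lt_succ_iff.1 (mem_range.1 hj)
  have hσt : blockStart N (M + 1) + 1 - t ∈ block N (M - j) := by
    rw [← image_reflect_block hsym hj]
    exact mem_image_of_mem _ (blockPrefix_subset_block (hb j hj) htj)
  rw [mem_biUnion_blockPrefix_iff hb (Nat.sub_le M j) hσt]
  have h := blockStart_add_blockStart_sub hsym hj
  rw [blockStart_succ j] at h
  have := hb_add j hj
  have := hsym j hj
  simp only [blockPrefix, block, mem_Icc] at htj hσt ⊢
  omega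

theorem biUnion_blockPrefix_subset_Icc (hb : ∀ i ≤ M, b i ≤ N i) :
    (range (M + 1)).biUnion (blockPrefix N b) ⊆ Icc 1 (blockStart N (M + 1)) :=
  biUnion_subset.2 fun j hj =>
    have hj : j ≤ M := Nat.lt_succ_iff.1 (mem_range.1 hj)
    (blockPrefix_subset_block (hb j hj)).trans (block_subset_Icc hj)

theorem two_mul_card_biUnion_blockPrefix_le (hsym : ∀ i ≤ M, N i = N (M - i))
    (hb : ∀ i ≤ M, b i ≤ N i) (hb_add : ∀ i ≤ M, b i + b (M - i) ≤ N i) :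
    2 * #((range (M + 1)).biUnion (blockPrefix N b)) ≤ blockStart N (M + 1) :=
  two_mul_card_le_of_disjoint_reflect (biUnion_blockPrefix_subset_Icc hb)
    fun _ ht => reflect_notMem_biUnion_blockPrefix hsym hb hb_add ht

theorem exists_perm_filter_block_eq_blockPrefix (hsym : ∀ i ≤ M, N i = N (M - i))
    (hb : ∀ i ≤ M, b i ≤ N i) (hb_add : ∀ i ≤ M, b i + b (M - i) ≤ N i) :
    ∃ π : Equiv.Perm ℕ, (∀ t ∉ Icc 1 (blockStart N (M + 1)), π t = t) ∧
      (∀ t ∈ Icc 1 (blockStart N (M + 1)),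
        π (blockStart N (M + 1) + 1 - t) = blockStart N (M + 1) + 1 - π t) ∧
      ∀ j ≤ M, (block N j).filter (π · ≤ #((range (M + 1)).biUnion (blockPrefix N b))) =
        blockPrefix N b j := by
  obtain ⟨π, hπ_out, hπ_reflect, hπS⟩ := exists_perm_reflect_le_card_iff
    (biUnion_blockPrefix_subset_Icc hb)
    fun _ ht => reflect_notMem_biUnion_blockPrefix hsym hb hb_add ht
  refine ⟨π, hπ_out, hπ_reflect, fun j hj => ?_⟩
  ext t
  rw [mem_filter]
  constructor
  · rintro ⟨ht, hπt⟩
    exact (mem_biUnion_blockPrefix_iff hb hj ht).1 ((hπS t (block_subset_Icc hj ht)).1 hπt)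
  · intro ht
    have htj := blockPrefix_subset_block (hb j hj) ht
    exact ⟨htj, (hπS t (block_subset_Icc hj htj)).2 ((mem_biUnion_blockPrefix_iff hb hj htj).2 ht)⟩

end BlockPrefix

theorem stmt_11_general (n m : ℕ) (N : ℕ → ℕ)
    (hsym : ∀ j ≤ 2 * m, N j = N (2 * m - j))
    (hsum : (∑ j ∈ Finset.range (2 * m + 1), N j) = 2 * n + 1)
    (a : ℕ → ℤ) (ha : ∀ j ≤ 2 * m, 0 ≤ a j ∧ a j ≤ (N j : ℤ)) :
    (∃ π : Equiv.Perm ℕ, ∃ k : ℕ, 1 ≤ k ∧ k ≤ n ∧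
        (∀ t : ℕ, ¬(1 ≤ t ∧ t ≤ 2 * n + 1) → π t = t) ∧
        (∀ t : ℕ, 1 ≤ t → t ≤ 2 * n + 1 → π (2 * n + 2 - t) = 2 * n + 2 - π t) ∧
        (∀ j ≤ 2 * m, a j =
          (((Finset.Icc (blockStart N j + 1) (blockStart N j + N j)).filter
            (fun t => π t ≤ k)).card : ℤ)))
      ↔ ((∃ j ≤ 2 * m, 0 < a j) ∧ ∀ j ≤ 2 * m, a j + a (2 * m - j) ≤ (N j : ℤ)) := by
  have hP : blockStart N (2 * m + 1) = 2 * n + 1 := hsum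
  constructor
  · rintro ⟨π, k, hk1, hkn, hπ_out, hπ_reflect, hcount⟩
    replace hcount : ∀ j ≤ 2 * m, a j = #((block N j).filter (π · ≤ k)) := hcount
    refine ⟨?_, fun j hj => ?_⟩
    · obtain ⟨j, hj, hpos⟩ := exists_card_filter_block_pos (M := 2 * m) hk1 (by rw [hP]; omega)
        fun t ht => hπ_out t (by simpa [hP] using ht)
      exact ⟨j, hj, hcount j hj ▸ Nat.cast_pos.2 hpos⟩
    · have hB := hP ▸ block_subset_Icc hj
      rw [hcount j hj, hcount _ (Nat.sub_le _ _), ← image_reflect_block hsym hj, hP]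
      exact_mod_cast (card_filter_add_card_filter_reflect_le (by omega) hB fun t ht =>
        hπ_reflect t (mem_Icc.1 (hB ht)).1 (mem_Icc.1 (hB ht)).2).trans_eq (card_block j)
  · rintro ⟨⟨j₀, hj₀, ha₀⟩, hle⟩
    set b : ℕ → ℕ := fun j => (a j).toNat
    have hb : ∀ j ≤ 2 * m, (b j : ℤ) = a j := fun j hj => Int.toNat_of_nonneg (ha j hj).1
    have hbN : ∀ j ≤ 2 * m, b j ≤ N j := fun j hj => by have := ha j hj; have := hb j hj; omega
    have hb_add : ∀ j ≤ 2 * m, b j + b (2 * m - j) ≤ N j := fun j hj => by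
      have := hle j hj; have := hb j hj; have := hb (2 * m - j) (Nat.sub_le _ _); omega
    obtain ⟨π, hπ_out, hπ_reflect, hπ_filter⟩ :=
      exists_perm_filter_block_eq_blockPrefix hsym hbN hb_add
    have hkn := two_mul_card_biUnion_blockPrefix_le hsym hbN hb_add
    rw [hP] at hπ_out hπ_reflect hkn
    refine ⟨π, #((range (2 * m + 1)).biUnion (blockPrefix N b)), ?_, by omega,
      fun t ht => hπ_out t (by simpa using ht), fun t h₁ h₂ => hπ_reflect t (mem_Icc.2 ⟨h₁, h₂⟩),
      fun j hj => ?_⟩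
    · have : (blockPrefix N b j₀).Nonempty := nonempty_Icc.2 (by have := hb j₀ hj₀; omega)
      exact card_pos.2 (this.mono (subset_biUnion_of_mem _ (mem_range.2 (by omega))))
    · change a j = #((block N j).filter _)
      rw [hπ_filter j hj, ← hb j hj]
      simp [blockPrefix]

/-- B-type weight correspondence: the `2n+1` positions
`{1,…,n,0,-n,…,-1}` (encoded in order as `1,…,2n+1`) are partitioned into
consecutive blocks `H^A_0, …, H^A_{2m}` of sizes `N^A_0, …, N^A_{2m}`, symmetric
with total sum `2n+1` and `N^A_m` odd.  Given `0 ≤ a_j ≤ N^A_j`, there exist a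
signed permutation `π` (a permutation of positions `1,…,2n+1` with
`π(2n+2-t) = 2n+2-π(t)`, fixing everything outside) and `1 ≤ k ≤ n` such that
`a_j` is the number of elements of `H^A_j` mapped by `π` into `{1,…,k}`, if and
only if some `a_j > 0` and `a_j + a_{2m-j} ≤ N^A_j` for all `j`. -/
theorem stmt_11 (n m : ℕ) (hn : 1 ≤ n) (N : ℕ → ℕ)
    (hsym : ∀ j ≤ 2 * m, N j = N (2 * m - j))
    (hsum : (∑ j ∈ Finset.range (2 * m + 1), N j) = 2 * n + 1)
    (hodd : Odd (N m))
    (a : ℕ → ℤ) (ha : ∀ j ≤ 2 * m, 0 ≤ a j ∧ a j ≤ (N j : ℤ)) :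
    (∃ π : Equiv.Perm ℕ, ∃ k : ℕ, 1 ≤ k ∧ k ≤ n ∧
        (∀ t : ℕ, ¬(1 ≤ t ∧ t ≤ 2 * n + 1) → π t = t) ∧
        (∀ t : ℕ, 1 ≤ t → t ≤ 2 * n + 1 → π (2 * n + 2 - t) = 2 * n + 2 - π t) ∧
        (∀ j ≤ 2 * m, a j =
          (((Finset.Icc (blockStart N j + 1) (blockStart N j + N j)).filter
            (fun t => π t ≤ k)).card : ℤ)))
      ↔ ((∃ j ≤ 2 * m, 0 < a j) ∧ ∀ j ≤ 2 * m, a j + a (2 * m - j) ≤ (N j : ℤ)) :=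
  stmt_11_general n m N hsym hsum a ha
end

section
/- Let N^A_0, ..., N^A_{2m} be nonnegative integers symmetric about m (N^A_j = N^A_{2m-j}) such that N^A_j ≥ N^A_{j-1} for all 1 ≤ j ≤ m and N^A_s ≥ N^A_{s-1} + 2 for some s ≤ m; take s maximal. Define a_j = 1 for s ≤ j ≤ 2m-s and a_j = 0 otherwise, u_j = (a_j, N^A_j - a_j) with u_{-1} = u_{2m+1} = (0,0). Then -(1/2)·Σ_{j=0}^{2m+1} (u_j - u_{j-1})^T M (u_j - u_{j-1}) + 2a_m ≤ 0, where M = [[0,1],[1,0]]. -/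
/-! Since `Qform (x, y) = 2xy` vanishes when `x = 0`, only the two steps where the 0/1 sequence
`a_j` jumps contribute to the sum. The reflection `j ↦ 2m - j` fixes `u` and carries the step
down at `2m - s + 1` onto the negative of the step up at `s`, so both contribute
`2 (N_s - N_{s-1} - 1) ≥ 2`, which outweighs `2 a_m = 2`. -/

/-- Extended vectors `u_j = (a_j, N_j - a_j)` for `0 ≤ j ≤ M`, with
`u_{-1} = u_{M+1} = (0,0)`; here `uextB M a N k` is `u_{k-1}`. -/
def uextB (M : ℕ) (a N : ℕ → ℤ) (k : ℕ) : ℤ × ℤ :=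
  if 1 ≤ k ∧ k ≤ M + 1 then (a (k - 1), N (k - 1) - a (k - 1)) else (0, 0)

/-- The quadratic form `uᵀ [[0,1],[1,0]] u = 2·u₁·u₂`. -/
def Qform (p : ℤ × ℤ) : ℤ := 2 * p.1 * p.2

/-- `N_{j-1}`, with the convention `N_{-1} = 0`. -/
def Nprev (N : ℕ → ℤ) (j : ℕ) : ℤ := if j = 0 then 0 else N (j - 1)

/-- The choice `a_j = 1` for `s ≤ j ≤ 2m-s`, `a_j = 0` otherwise. -/
def aJump (m s : ℕ) : ℕ → ℤ := fun j => if s ≤ j ∧ j ≤ 2 * m - s then 1 else 0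

theorem Qform_neg (p : ℤ × ℤ) : Qform (-p) = Qform p := by
  simp only [Qform, Prod.fst_neg, Prod.snd_neg]
  ring

theorem Qform_eq_zero_of_fst_eq_zero {p : ℤ × ℤ} (hp : p.1 = 0) : Qform p = 0 := by
  simp [Qform, hp]

theorem aJump_reflect {m s j : ℕ} (hj : j ≤ 2 * m) : aJump m s j = aJump m s (2 * m - j) := by
  simp only [aJump]
  congr 1
  apply propext
  omega

theorem uextB_reflect {M k : ℕ} {a N : ℕ → ℤ} (ha : ∀ j ≤ M, a j = a (M - j))
    (hN : ∀ j ≤ M, N j = N (M - j)) (hk : k ≤ M + 2) :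
    uextB M a N (M + 2 - k) = uextB M a N k := by
  unfold uextB
  by_cases hin : 1 ≤ k ∧ k ≤ M + 1
  · have hidx : M + 2 - k - 1 = M - (k - 1) := by omega
    rw [if_pos (by omega), if_pos hin, hidx, ← ha _ (by omega), ← hN _ (by omega)]
  · rw [if_neg (by omega), if_neg hin]

theorem fst_uextB_aJump {m s : ℕ} (N : ℕ → ℤ) (hs : s ≤ m) (k : ℕ) :
    (uextB (2 * m) (aJump m s) N k).1 = if s < k ∧ k ≤ 2 * m - s + 1 then 1 else 0 := by
  simp only [uextB, aJump, apply_ite (Prod.fst (α := ℤ) (β := ℤ))]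
  split_ifs <;> omega

theorem Qform_uextB_aJump_sub_eq_zero {m s j : ℕ} (N : ℕ → ℤ) (hs : s ≤ m)
    (hjs : j ≠ s) (hjt : j ≠ 2 * m - s + 1) :
    Qform (uextB (2 * m) (aJump m s) N (j + 1) - uextB (2 * m) (aJump m s) N j) = 0 := by
  apply Qform_eq_zero_of_fst_eq_zero
  rw [Prod.fst_sub, fst_uextB_aJump N hs, fst_uextB_aJump N hs]
  split_ifs <;> omega

theorem uextB_aJump_succ_sub_self {m s : ℕ} (N : ℕ → ℤ) (hs : s ≤ m) :
    uextB (2 * m) (aJump m s) N (s + 1) - uextB (2 * m) (aJump m s) N s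
      = (1, N s - 1 - Nprev N s) := by
  rcases Nat.eq_zero_or_pos s with rfl | hs0
  · simp [uextB, aJump, Nprev]
  · simp only [uextB, aJump, Nprev, Nat.add_sub_cancel]
    rw [if_pos (by omega), if_pos (by omega), if_pos (by omega), if_neg (by omega),
      if_neg (by omega)]
    ext <;> simp only [Prod.fst_sub, Prod.snd_sub] <;> ring

theorem stmt_13_general (m : ℕ) (N : ℕ → ℤ)
    (hsym : ∀ j ≤ 2 * m, N j = N (2 * m - j))
    (s : ℕ) (hsm : s ≤ m)
    (hjump : Nprev N s + 2 ≤ N s) :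
    -(1 / 2 : ℚ) * ∑ j ∈ Finset.range (2 * m + 2),
        ((Qform (uextB (2 * m) (aJump m s) N (j + 1) - uextB (2 * m) (aJump m s) N j) : ℤ) : ℚ)
      + 2 * ((aJump m s m : ℤ) : ℚ) ≤ 0 := by
  set u := uextB (2 * m) (aJump m s) N
  set t := 2 * m - s + 1
  have hsum : ∑ j ∈ Finset.range (2 * m + 2), Qform (u (j + 1) - u j)
      = Qform (u (s + 1) - u s) + Qform (u (t + 1) - u t) :=
    Finset.sum_eq_add_of_mem s t (by simp; omega) (by simp; omega) (by omega)
      fun j _ hj => Qform_uextB_aJump_sub_eq_zero N hsm hj.1 hj.2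
  have hreflect : u (t + 1) - u t = -(u (s + 1) - u s) := by
    have hu : ∀ k ≤ 2 * m + 2, u (2 * m + 2 - k) = u k :=
      fun k hk => uextB_reflect (fun j hj => aJump_reflect hj) hsym hk
    rw [← hu s (by omega), ← hu (s + 1) (by omega), neg_sub]
    congr 2 <;> omega
  have hstep : Qform (u (s + 1) - u s) = 2 * (N s - 1 - Nprev N s) := by
    rw [uextB_aJump_succ_sub_self N hsm, Qform]
    ring
  have ham : aJump m s m = 1 := if_pos (by omega)
  rw [← Int.cast_sum, hsum, hreflect, Qform_neg, hstep, ham]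
  have hjumpQ : (Nprev N s : ℚ) + 2 ≤ N s := by exact_mod_cast hjump
  push_cast
  linarith

/-- B-type non-positivity, jump case: with `N^A_0,…,N^A_{2m}`
nonnegative, symmetric about `m`, weakly increasing up to `m` (with
`N^A_{-1} = 0`), and `s ≤ m` maximal with `N^A_s ≥ N^A_{s-1} + 2`; setting
`a_j = 1` for `s ≤ j ≤ 2m-s` and `0` otherwise, `u_j = (a_j, N^A_j - a_j)`,
`u_{-1} = u_{2m+1} = (0,0)`:
`-(1/2)·Σ_{j=0}^{2m+1} (u_j-u_{j-1})ᵀ M (u_j-u_{j-1}) + 2a_m ≤ 0`. -/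
theorem stmt_13 (m : ℕ) (N : ℕ → ℤ)
    (hNnn : ∀ j ≤ 2 * m, 0 ≤ N j)
    (hsym : ∀ j ≤ 2 * m, N j = N (2 * m - j))
    (hmono : ∀ j ≤ m, Nprev N j ≤ N j)
    (s : ℕ) (hsm : s ≤ m)
    (hjump : Nprev N s + 2 ≤ N s)
    (hmax : ∀ t ≤ m, Nprev N t + 2 ≤ N t → t ≤ s) :
    -(1 / 2 : ℚ) * ∑ j ∈ Finset.range (2 * m + 2),
        ((Qform (uextB (2 * m) (aJump m s) N (j + 1) - uextB (2 * m) (aJump m s) N j) : ℤ) : ℚ)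
      + 2 * ((aJump m s m : ℤ) : ℚ) ≤ 0 :=
  stmt_13_general m N hsym s hsm hjump
end

section
/- Let N^A_0, ..., N^A_{2m} be nonnegative integers with N^A_0 = 1, N^A_{j-1} ≤ N^A_j ≤ N^A_{j-1} + 1 for 1 ≤ j ≤ m, and N^A_j = N^A_{2m-j} for all j (symmetric, with N^A_m odd). Then for every choice of integers a_0, ..., a_{2m} with 0 ≤ a_j ≤ N^A_j, a_j + a_{2m-j} ≤ N^A_j for all j, and some a_j > 0, the quantity -(1/2)·Σ_{j=0}^{2m+1} (u_j - u_{j-1})^T M (u_j - u_{j-1}) + 2a_m is strictly positive, where u_j = (a_j, N^A_j - a_j), u_{-1} = u_{2m+1} = (0,0), M = [[0,1],[1,0]]. -/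
/-!
A step `v = u_k - u_{k-1}` has `vᵀ M v = 2 v₁ v₂`, and `v₁ + v₂ = N_k - N_{k-1} ∈ {-1, 0, 1}`
(with `N` extended by zero). Integers whose sum lies in `{-1, 0, 1}` have nonpositive product, so
the quantity is at least `2 a_m ≥ 0`. If `a_m = 0 < a_j`, then `a` drops on the way from `j` to
the peak `m` of `N`; at such a step the first coordinate of `v` is negative while `v₁ + v₂ ≥ 0`
(before the peak; symmetrically after it), so `v₁ v₂ < 0` and the inequality is strict.
-/

/-- `N` extended by zero, indexed like `uextB`: `zeroExt M N k` is `N_{k-1}`, with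
`N_{-1} = N_{M+1} = 0`. -/
def zeroExt (M : ℕ) (N : ℕ → ℤ) (k : ℕ) : ℤ :=
  if 1 ≤ k ∧ k ≤ M + 1 then N (k - 1) else 0

lemma Qform_nonpos_of_abs_add_le_one {v : ℤ × ℤ} (h : |v.1 + v.2| ≤ 1) : Qform v ≤ 0 := by
  obtain ⟨h₁, h₂⟩ := abs_le.1 h
  unfold Qform
  rcases lt_trichotomy v.1 0 with hx | hx | hx
  · nlinarith
  · simp [hx]
  · nlinarith

lemma Qform_neg_of_fst_neg {v : ℤ × ℤ} (hx : v.1 < 0) (h : 0 ≤ v.1 + v.2) : Qform v < 0 := by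
  unfold Qform
  nlinarith

lemma Qform_neg_of_fst_pos {v : ℤ × ℤ} (hx : 0 < v.1) (h : v.1 + v.2 ≤ 0) : Qform v < 0 := by
  unfold Qform
  nlinarith

lemma exists_succ_lt_of_lt {α : Type*} [LinearOrder α] {f : ℕ → α} {b c : ℕ} (hbc : b ≤ c)
    (h : f c < f b) : ∃ k, b ≤ k ∧ k < c ∧ f (k + 1) < f k := by
  by_contra! hmono
  have hle : ∀ n, b ≤ n → n ≤ c → f b ≤ f n := by
    intro n hbn
    induction n, hbn using Nat.le_induction with
    | base => exact fun _ => le_rfl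
    | succ n hbn ih => exact fun hn => (ih (by omega)).trans (hmono n hbn hn)
  exact h.not_ge (hle c hbc le_rfl)

section uextB

variable {M : ℕ} {a N : ℕ → ℤ}

lemma uextB_succ {j : ℕ} (hj : j ≤ M) : uextB M a N (j + 1) = (a j, N j - a j) := by
  simp [uextB, hj]

lemma uextB_fst_add_snd (k : ℕ) : (uextB M a N k).1 + (uextB M a N k).2 = zeroExt M N k := by
  unfold uextB zeroExt
  split_ifs <;> simp

lemma abs_zeroExt_succ_sub_le_one (h₀ : |N 0| ≤ 1) (hM : |N M| ≤ 1)
    (hstep : ∀ k < M, |N (k + 1) - N k| ≤ 1) (k : ℕ) :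
    |zeroExt M N (k + 1) - zeroExt M N k| ≤ 1 := by
  rcases k with _ | k
  · simpa [zeroExt] using h₀
  rcases lt_trichotomy k M with hk | rfl | hk
  · simpa [zeroExt, show k + 1 ≤ M by omega, hk.le] using hstep k hk
  · simpa [zeroExt] using hM
  · simp [zeroExt, show ¬k ≤ M by omega, show ¬k + 1 ≤ M by omega]

lemma Qform_uextB_sub_nonpos (hN : ∀ k, |zeroExt M N (k + 1) - zeroExt M N k| ≤ 1) (k : ℕ) :
    Qform (uextB M a N (k + 1) - uextB M a N k) ≤ 0 := by
  apply Qform_nonpos_of_abs_add_le_one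
  rw [Prod.fst_sub, Prod.snd_sub, sub_add_sub_comm, uextB_fst_add_snd, uextB_fst_add_snd]
  exact hN k

lemma Qform_uextB_succ_sub_neg_of_lt {k : ℕ} (hk : k < M) (ha : a (k + 1) < a k)
    (hN : N k ≤ N (k + 1)) : Qform (uextB M a N (k + 2) - uextB M a N (k + 1)) < 0 := by
  rw [uextB_succ hk, uextB_succ hk.le, Prod.mk_sub_mk]
  exact Qform_neg_of_fst_neg (sub_neg.2 ha) (by dsimp only; linarith)

lemma Qform_uextB_succ_sub_neg_of_gt {k : ℕ} (hk : k < M) (ha : a k < a (k + 1))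
    (hN : N (k + 1) ≤ N k) : Qform (uextB M a N (k + 2) - uextB M a N (k + 1)) < 0 := by
  rw [uextB_succ hk, uextB_succ hk.le, Prod.mk_sub_mk]
  exact Qform_neg_of_fst_pos (sub_pos.2 ha) (by dsimp only; linarith)

lemma exists_Qform_uextB_sub_neg {m j : ℕ} (hmM : m ≤ M) (hjM : j ≤ M)
    (hup : ∀ k < m, N k ≤ N (k + 1)) (hdown : ∀ k, m ≤ k → k < M → N (k + 1) ≤ N k)
    (hlt : a m < a j) :
    ∃ k ∈ Finset.range (M + 2), Qform (uextB M a N (k + 1) - uextB M a N k) < 0 := by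
  rcases lt_or_gt_of_ne (show j ≠ m by rintro rfl; exact hlt.false) with hj | hj
  · obtain ⟨k, hjk, hkm, hdrop⟩ := exists_succ_lt_of_lt hj.le hlt
    exact ⟨k + 1, Finset.mem_range.2 (by omega),
      Qform_uextB_succ_sub_neg_of_lt (by omega) hdrop (hup k hkm)⟩
  · obtain ⟨k, hmk, hkj, hrise⟩ :=
      exists_succ_lt_of_lt (f := fun i => -a i) hj.le (neg_lt_neg hlt)
    exact ⟨k + 1, Finset.mem_range.2 (by omega),
      Qform_uextB_succ_sub_neg_of_gt (by omega) (neg_lt_neg_iff.1 hrise) (hdown k hmk (by omega))⟩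

end uextB

lemma step_bounds_of_symm {m : ℕ} {N : ℕ → ℤ}
    (hstep : ∀ j : ℕ, 1 ≤ j → j ≤ m → N (j - 1) ≤ N j ∧ N j ≤ N (j - 1) + 1)
    (hsym : ∀ j ≤ 2 * m, N j = N (2 * m - j)) {k : ℕ} (hmk : m ≤ k) (hk : k < 2 * m) :
    N (k + 1) ≤ N k ∧ N k ≤ N (k + 1) + 1 := by
  rw [hsym k hk.le, hsym (k + 1) hk, show 2 * m - (k + 1) = 2 * m - k - 1 by omega]
  exact hstep (2 * m - k) (by omega) (by omega)

theorem stmt_14_general (m : ℕ) (N : ℕ → ℤ) (hN0 : N 0 = 1)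
    (hstep : ∀ j : ℕ, 1 ≤ j → j ≤ m → N (j - 1) ≤ N j ∧ N j ≤ N (j - 1) + 1)
    (hsym : ∀ j ≤ 2 * m, N j = N (2 * m - j))
    (a : ℕ → ℤ) (ha : ∀ j ≤ 2 * m, 0 ≤ a j ∧ a j ≤ N j)
    (hex : ∃ j ≤ 2 * m, 0 < a j) :
    0 < -(1 / 2 : ℚ) * ∑ j ∈ Finset.range (2 * m + 2),
        ((Qform (uextB (2 * m) a N (j + 1) - uextB (2 * m) a N j) : ℤ) : ℚ)
      + 2 * ((a m : ℤ) : ℚ) := by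
  have hN2m : N (2 * m) = 1 := by simpa [hN0] using (hsym 0 (Nat.zero_le _)).symm
  have hup (k : ℕ) (hk : k < m) : N k ≤ N (k + 1) ∧ N (k + 1) ≤ N k + 1 := by
    simpa using hstep (k + 1) (by omega) hk
  have hdown (k : ℕ) (hmk : m ≤ k) (hk : k < 2 * m) := step_bounds_of_symm hstep hsym hmk hk
  have hzeroExt : ∀ k, |zeroExt (2 * m) N (k + 1) - zeroExt (2 * m) N k| ≤ 1 := by
    refine abs_zeroExt_succ_sub_le_one (by simp [hN0]) (by simp [hN2m]) fun k hk => abs_le.2 ?_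
    rcases lt_or_ge k m with hkm | hmk
    · constructor <;> linarith [hup k hkm]
    · constructor <;> linarith [hdown k hmk hk]
  have hle : ∀ k ∈ Finset.range (2 * m + 2),
      Qform (uextB (2 * m) a N (k + 1) - uextB (2 * m) a N k) ≤ 0 :=
    fun k _ => Qform_uextB_sub_nonpos hzeroExt k
  have key : 0 < -∑ k ∈ Finset.range (2 * m + 2),
      Qform (uextB (2 * m) a N (k + 1) - uextB (2 * m) a N k) + 4 * a m := by
    rcases (ha m (by omega)).1.eq_or_lt with ham | ham
    · obtain ⟨j, hj, haj⟩ := hex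
      linarith [Finset.sum_neg' hle <| exists_Qform_uextB_sub_neg (by omega) hj
        (fun k hk => (hup k hk).1) (fun k hmk hk => (hdown k hmk hk).1) (ham ▸ haj)]
    · linarith [Finset.sum_nonpos hle]
  have keyQ : (0 : ℚ) < -∑ k ∈ Finset.range (2 * m + 2),
      (Qform (uextB (2 * m) a N (k + 1) - uextB (2 * m) a N k) : ℚ) + 4 * (a m : ℚ) := by
    exact_mod_cast key
  linarith

/-- B-type positivity for distinguished weightings: with
`N^A_0 = 1`, `N^A_{j-1} ≤ N^A_j ≤ N^A_{j-1} + 1` for `1 ≤ j ≤ m`, symmetric about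
`m` with `N^A_m` odd, and `0 ≤ a_j ≤ N^A_j`, `a_j + a_{2m-j} ≤ N^A_j` for all
`j ≤ 2m`, with some `a_j > 0`:
`-(1/2)·Σ_{j=0}^{2m+1} (u_j-u_{j-1})ᵀ M (u_j-u_{j-1}) + 2a_m > 0`, where
`u_j = (a_j, N^A_j - a_j)` and `u_{-1} = u_{2m+1} = (0,0)`. -/
theorem stmt_14 (m : ℕ) (N : ℕ → ℤ) (hN0 : N 0 = 1)
    (hstep : ∀ j : ℕ, 1 ≤ j → j ≤ m → N (j - 1) ≤ N j ∧ N j ≤ N (j - 1) + 1)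
    (hsym : ∀ j ≤ 2 * m, N j = N (2 * m - j))
    (hodd : Odd (N m))
    (a : ℕ → ℤ) (ha : ∀ j ≤ 2 * m, 0 ≤ a j ∧ a j ≤ N j)
    (hpair : ∀ j ≤ 2 * m, a j + a (2 * m - j) ≤ N j)
    (hex : ∃ j ≤ 2 * m, 0 < a j) :
    0 < -(1 / 2 : ℚ) * ∑ j ∈ Finset.range (2 * m + 2),
        ((Qform (uextB (2 * m) a N (j + 1) - uextB (2 * m) a N j) : ℤ) : ℚ)
      + 2 * ((a m : ℤ) : ℚ) :=
  stmt_14_general m N hN0 hstep hsym a ha hex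
end

section
/- Define f: ℤ^7 → ℤ^3 by f(e_1) = e_1 - e_3, f(e_2) = e_2 - e_3, f(e_3) = e_1 - e_2, f(e_4) = 0, f(e_5) = -(e_1 - e_2), f(e_6) = -(e_2 - e_3), f(e_7) = -(e_1 - e_3). Let α = e_1 - e_2 and β = -e_1 + 2e_2 - e_3 be simple roots of G_2 with positive roots α, β, β+α, β+2α, β+3α, 2β+3α. Then f maps the simple roots e_i - e_{i+1} of A_6 to simple roots of G_2 (to α for i ∈ {1,3,4,6} and to β for i ∈ {2,5}), and f is positive and root surjective: every positive root of G_2 has at least one root preimage in A_6, and all its root preimages are positive roots of A_6. -/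
/-!
`f` sends `e_1, …, e_7` to the weights `β+2α, β+α, α, 0, -α, -(β+α), -(β+2α)`, so the
consecutive differences `f(e_i - e_{i+1})` are simple roots, and a positive root of `G_2` is
reached as the image of a suitable run `e_a - e_b` of consecutive simple roots. For positivity,
the height `g2Height`, the linear form with value `1` on `α` and `β`, takes the value `b - a`
on `f(e_a - e_b)` and is positive on every positive root of `G_2`, which forces `a < b`.
-/

/-- The `i`-th standard basis vector `e_i` (1-indexed coordinates in `ℕ → ℤ`). -/
def eb (i : ℕ) : ℕ → ℤ := fun j => if j = i then 1 else 0

/-- Roots of `A_{N-1}` living in coordinates `1,…,N`: the vectors `e_a - e_b`, `a ≠ b`. -/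
def isArootOf (N : ℕ) (r : ℕ → ℤ) : Prop :=
  ∃ a b : ℕ, 1 ≤ a ∧ a ≤ N ∧ 1 ≤ b ∧ b ≤ N ∧ a ≠ b ∧ r = eb a - eb b

/-- Positive roots of `A_{N-1}`: `e_a - e_b` with `a < b`. -/
def isArootPosOf (N : ℕ) (r : ℕ → ℤ) : Prop :=
  ∃ a b : ℕ, 1 ≤ a ∧ a < b ∧ b ≤ N ∧ r = eb a - eb b

/-- The map `f : ℤ^7 → ℤ^3` determined by `f(e_1) = e_1 - e_3`, `f(e_2) = e_2 - e_3`,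
`f(e_3) = e_1 - e_2`, `f(e_4) = 0`, `f(e_5) = -(e_1 - e_2)`, `f(e_6) = -(e_2 - e_3)`,
`f(e_7) = -(e_1 - e_3)`. -/
def fG (v : ℕ → ℤ) : ℕ → ℤ := fun j =>
  if j = 1 then v 1 + v 3 - v 5 - v 7
  else if j = 2 then v 2 - v 3 + v 5 - v 6
  else if j = 3 then -v 1 - v 2 + v 6 + v 7
  else 0

/-- The simple root `α = e_1 - e_2` of `G_2`. -/
def alphaG : ℕ → ℤ := eb 1 - eb 2

/-- The simple root `β = -e_1 + 2e_2 - e_3` of `G_2`. -/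
def betaG : ℕ → ℤ := fun j => if j = 1 then -1 else if j = 2 then 2 else if j = 3 then -1 else 0

/-- Positive roots of `G_2`: `α, β, β+α, β+2α, β+3α, 2β+3α`. -/
def isG2pos (s : ℕ → ℤ) : Prop :=
  s = alphaG ∨ s = betaG ∨ s = betaG + alphaG ∨ s = betaG + 2 • alphaG ∨
    s = betaG + 3 • alphaG ∨ s = 2 • betaG + 3 • alphaG

lemma fG_sub (u v : ℕ → ℤ) : fG (u - v) = fG u - fG v := by
  funext j
  simp only [fG, Pi.sub_apply]
  split_ifs <;> ring

lemma fG_add (u v : ℕ → ℤ) : fG (u + v) = fG u + fG v := by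
  funext j
  simp only [fG, Pi.add_apply]
  split_ifs <;> ring

lemma fG_eb_sub_eb_add (a b c : ℕ) :
    fG (eb a - eb c) = fG (eb a - eb b) + fG (eb b - eb c) := by
  rw [← fG_add, sub_add_sub_cancel]

lemma fG_simpleRoot_eq_alphaG (i : ℕ) (hi : i ∈ ({1, 3, 4, 6} : Set ℕ)) :
    fG (eb i - eb (i + 1)) = alphaG := by
  rcases hi with rfl | rfl | rfl | rfl <;>
    funext j <;> rcases j with _ | _ | _ | _ | j <;> simp [fG, eb, alphaG]

lemma fG_simpleRoot_eq_betaG (i : ℕ) (hi : i ∈ ({2, 5} : Set ℕ)) :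
    fG (eb i - eb (i + 1)) = betaG := by
  rcases hi with rfl | rfl <;>
    funext j <;> rcases j with _ | _ | _ | _ | j <;> simp [fG, eb, betaG]

lemma isArootOf_eb_sub_eb {N a b : ℕ} (ha : 1 ≤ a) (hab : a < b) (hb : b ≤ N) :
    isArootOf N (eb a - eb b) :=
  ⟨a, b, ha, by omega, by omega, hb, by omega, rfl⟩

lemma exists_isArootOf_fG_eq {s : ℕ → ℤ} (hs : isG2pos s) :
    ∃ r : ℕ → ℤ, isArootOf 7 r ∧ fG r = s := by
  have h12 : fG (eb 1 - eb 2) = alphaG := fG_simpleRoot_eq_alphaG 1 (by simp)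
  have h23 : fG (eb 2 - eb 3) = betaG := fG_simpleRoot_eq_betaG 2 (by simp)
  have h34 : fG (eb 3 - eb 4) = alphaG := fG_simpleRoot_eq_alphaG 3 (by simp)
  have h45 : fG (eb 4 - eb 5) = alphaG := fG_simpleRoot_eq_alphaG 4 (by simp)
  have h56 : fG (eb 5 - eb 6) = betaG := fG_simpleRoot_eq_betaG 5 (by simp)
  rcases hs with rfl | rfl | rfl | rfl | rfl | rfl
  · exact ⟨eb 1 - eb 2, isArootOf_eb_sub_eb (by norm_num) (by norm_num) (by norm_num), h12⟩
  · exact ⟨eb 2 - eb 3, isArootOf_eb_sub_eb (by norm_num) (by norm_num) (by norm_num), h23⟩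
  · refine ⟨eb 2 - eb 4, isArootOf_eb_sub_eb (by norm_num) (by norm_num) (by norm_num), ?_⟩
    rw [fG_eb_sub_eb_add 2 3 4, h23, h34]
  · refine ⟨eb 1 - eb 4, isArootOf_eb_sub_eb (by norm_num) (by norm_num) (by norm_num), ?_⟩
    rw [fG_eb_sub_eb_add 1 2 4, fG_eb_sub_eb_add 2 3 4, h12, h23, h34]
    module
  · refine ⟨eb 1 - eb 5, isArootOf_eb_sub_eb (by norm_num) (by norm_num) (by norm_num), ?_⟩
    rw [fG_eb_sub_eb_add 1 4 5, fG_eb_sub_eb_add 1 2 4, fG_eb_sub_eb_add 2 3 4, h12, h23, h34,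
      h45]
    module
  · refine ⟨eb 1 - eb 6, isArootOf_eb_sub_eb (by norm_num) (by norm_num) (by norm_num), ?_⟩
    rw [fG_eb_sub_eb_add 1 5 6, fG_eb_sub_eb_add 1 4 5, fG_eb_sub_eb_add 1 2 4,
      fG_eb_sub_eb_add 2 3 4, h12, h23, h34, h45, h56]
    module

def g2Height (v : ℕ → ℤ) : ℤ := 3 * v 1 + 2 * v 2

lemma g2Height_sub (u v : ℕ → ℤ) : g2Height (u - v) = g2Height u - g2Height v := by
  simp only [g2Height, Pi.sub_apply]
  ring

lemma isG2pos.g2Height_pos {s : ℕ → ℤ} (hs : isG2pos s) : 0 < g2Height s := by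
  rcases hs with rfl | rfl | rfl | rfl | rfl | rfl <;> decide

lemma g2Height_fG_eb {a : ℕ} (ha : 1 ≤ a) (ha' : a ≤ 7) : g2Height (fG (eb a)) = 4 - a := by
  interval_cases a <;> decide

lemma isArootPosOf_of_g2Height_pos {r : ℕ → ℤ} (hr : isArootOf 7 r)
    (hpos : 0 < g2Height (fG r)) : isArootPosOf 7 r := by
  obtain ⟨a, b, ha, ha', hb, hb', -, rfl⟩ := hr
  rw [fG_sub, g2Height_sub, g2Height_fG_eb ha ha', g2Height_fG_eb hb hb'] at hpos
  exact ⟨a, b, ha, by omega, hb', rfl⟩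

/-- `f` maps the simple roots `e_i - e_{i+1}` of `A_6` to simple roots
of `G_2` (to `α` for `i ∈ {1,3,4,6}` and to `β` for `i ∈ {2,5}`), and `f` is
positive and root surjective: every positive root of `G_2` has at least one root
preimage in `A_6`, and all of its root preimages are positive roots of `A_6`. -/
theorem stmt_17 :
    (∀ i ∈ ({1, 3, 4, 6} : Set ℕ), fG (eb i - eb (i + 1)) = alphaG) ∧
    (∀ i ∈ ({2, 5} : Set ℕ), fG (eb i - eb (i + 1)) = betaG) ∧
    (∀ s : ℕ → ℤ, isG2pos s →
      (∃ r : ℕ → ℤ, isArootOf 7 r ∧ fG r = s) ∧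
      (∀ r : ℕ → ℤ, isArootOf 7 r → fG r = s → isArootPosOf 7 r)) :=
  ⟨fG_simpleRoot_eq_alphaG, fG_simpleRoot_eq_betaG, fun _ hs =>
    ⟨exists_isArootOf_fG_eq hs, fun _ hr hf =>
      isArootPosOf_of_g2Height_pos hr (hf ▸ hs.g2Height_pos)⟩⟩
end
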